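/- arXiv:2308.14778 — 5 statements merged into one kernel-verified Lean document; each statement's English description precedes it below -/
import Mathlib

section
/- For every positive integer D, there exists a bipartite graph H with parts partitioned into classes all of size exactly 2D (with the partition refining the bipartition), such that H has maximum degree D and H has no independent transversal. That is, the part-size condition 2D in the bipartite-cover independent transversal theorem cannot be relaxed to 2D − 1. -/
/-- An independent transversal of a vertex-partitioned graph: a choice of one
vertex from each partition class (fibers of `p`) forming an independent set. -/
def HasIT {V ι : Type*} (G : SimpleGraph V) (p : V → ι) : Prop :=
  ∃ f : ι → V, (∀ i, p (f i) = i) ∧ ∀ i j, ¬ G.Adj (f i) (f j)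

/-!
Write `D = k + 1`. Label every vertex, and join an `A`-vertex to a `B`-vertex exactly when they
carry the same label; the degree of a vertex is then the number of vertices of the other side with
its label, so it suffices that each label occurs at most `k + 1` times on each side.

Classes have `2k + 1 = k + (k + 1)` slots. A *link* class carries `k` copies of a label `(t, n)`
and `k + 1` copies of `(t, n + 1)`; it lies on side `B` for even `n` and on side `A` for odd `n`.
If the other side takes `(t, n)`, the link class has to take `(t, n + 1)`. A root class on side `A`
with labels `(true, 0)` and `(false, 0)` takes `(t, 0)` for some `t`, and then the chain of links
of index `t` forces side `A` to take every `(t, 2j)` with `j ≤ k`. A terminal class on side `B`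
built from these labels only has no admissible vertex left.
-/

theorem HasIT.of_comap {V W ι κ : Type*} {G : SimpleGraph W} {p : W → ι} (e : V → W)
    (eι : ι ≃ κ) (h : HasIT (G.comap e) (eι ∘ p ∘ e)) : HasIT G p := by
  obtain ⟨f, hf, hind⟩ := h
  exact ⟨e ∘ f ∘ eι, fun i => eι.injective (hf (eι i)), fun i j => hind (eι i) (eι j)⟩

theorem Set.ncard_setOf_fst_eq {α β : Type*} (a : α) :
    {v : α × β | v.1 = a}.ncard = Nat.card β := by
  have : {v : α × β | v.1 = a} = Prod.mk a '' Set.univ := by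
    ext ⟨x, y⟩; simp [eq_comm]
  rw [this, Set.ncard_image_of_injective _ (Prod.mk_right_injective a), Set.ncard_univ]

theorem Nat.card_fiber_le_of_injective {α β γ : Type*} [Finite γ] (f : α → β) (w : α → γ)
    (hw : ∀ a a', f a = f a' → w a = w a' → a = a') (b : β) :
    Nat.card {a // f a = b} ≤ Nat.card γ :=
  Nat.card_le_card_of_injective (fun a => w a.1) fun a a' h =>
    Subtype.ext (hw a a' (a.2.trans a'.2.symm) h)

theorem ncard_fiber_equiv_comp {V W ι κ : Type*} (p : W → ι) (eV : V ≃ W) (eι : ι ≃ κ) (i : κ) :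
    {v | (eι ∘ p ∘ eV) v = i}.ncard = {w | p w = eι.symm i}.ncard := by
  rw [← Set.ncard_preimage_of_injective_subset_range eV.injective (by simp)]
  simp [← Equiv.eq_symm_apply]

section LabelGraph

variable {α β L : Type*} (ℓA : α → L) (ℓB : β → L)

def labelGraph : SimpleGraph (α ⊕ β) where
  Adj
    | .inl a, .inr b => ℓA a = ℓB b
    | .inr b, .inl a => ℓA a = ℓB b
    | _, _ => False
  symm := ⟨by rintro (a | b) (a' | b') h <;> exact h⟩
  loopless := ⟨by rintro (a | b) h <;> exact h⟩

variable {ℓA ℓB}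

@[simp] theorem labelGraph_adj_inl_inl (a a' : α) :
    ¬ (labelGraph ℓA ℓB).Adj (.inl a) (.inl a') := id

@[simp] theorem labelGraph_adj_inr_inr (b b' : β) :
    ¬ (labelGraph ℓA ℓB).Adj (.inr b) (.inr b') := id

@[simp] theorem labelGraph_adj_inl_inr (a : α) (b : β) :
    (labelGraph ℓA ℓB).Adj (.inl a) (.inr b) ↔ ℓA a = ℓB b := Iff.rfl

@[simp] theorem labelGraph_adj_inr_inl (a : α) (b : β) :
    (labelGraph ℓA ℓB).Adj (.inr b) (.inl a) ↔ ℓA a = ℓB b := Iff.rfl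

theorem ncard_neighborSet_labelGraph_le {D : ℕ} (hA : ∀ x, Nat.card {a // ℓA a = x} ≤ D)
    (hB : ∀ x, Nat.card {b // ℓB b = x} ≤ D) (v : α ⊕ β) :
    ((labelGraph ℓA ℓB).neighborSet v).ncard ≤ D := by
  rcases v with a | b
  · have : (labelGraph ℓA ℓB).neighborSet (.inl a) = Sum.inr '' {b | ℓB b = ℓA a} := by
      ext (a' | b') <;> simp [eq_comm]
    rw [this, Set.ncard_image_of_injective _ Sum.inr_injective, ← Nat.card_coe_set_eq]
    exact hB _
  · have : (labelGraph ℓA ℓB).neighborSet (.inr b) = Sum.inl '' {a | ℓA a = ℓB b} := by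
      ext (a' | b') <;> simp
    rw [this, Set.ncard_image_of_injective _ Sum.inl_injective, ← Nat.card_coe_set_eq]
    exact hA _

theorem exists_slots_of_hasIT {I J S : Type*} {ℓA : I → S → L} {ℓB : J → S → L}
    (h : HasIT (labelGraph (Function.uncurry ℓA) (Function.uncurry ℓB))
      (Sum.map Prod.fst Prod.fst)) :
    ∃ (sA : I → S) (sB : J → S), ∀ i j, ℓA i (sA i) ≠ ℓB j (sB j) := by
  obtain ⟨f, hf, hind⟩ := h
  have hA : ∀ i, ∃ s, f (.inl i) = .inl (i, s) := by
    intro i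
    have := hf (.inl i)
    rcases hfi : f (.inl i) with ⟨i', s⟩ | b <;> simp_all
  have hB : ∀ j, ∃ s, f (.inr j) = .inr (j, s) := by
    intro j
    have := hf (.inr j)
    rcases hfj : f (.inr j) with a | ⟨j', s⟩ <;> simp_all
  choose sA hsA using hA
  choose sB hsB using hB
  refine ⟨sA, sB, fun i j => ?_⟩
  simpa [hsA, hsB] using hind (.inl i) (.inr j)

end LabelGraph

theorem exists_fin_of_finite {α β I J : Type*} [Finite α] [Finite β] [Finite I] [Finite J]
    (G : SimpleGraph (α ⊕ β)) (pA : α → I) (pB : β → J) (D m : ℕ)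
    (hAA : ∀ a a' : α, ¬ G.Adj (.inl a) (.inl a')) (hBB : ∀ b b' : β, ¬ G.Adj (.inr b) (.inr b'))
    (hdeg : ∀ v, (G.neighborSet v).ncard ≤ D)
    (hpA : ∀ i, {a | pA a = i}.ncard = m) (hpB : ∀ j, {b | pB b = j}.ncard = m)
    (hIT : ¬ HasIT G (Sum.map pA pB)) :
    ∃ (nA nB sA sB : ℕ) (G : SimpleGraph (Fin nA ⊕ Fin nB))
      (pA : Fin nA → Fin sA) (pB : Fin nB → Fin sB),
      (∀ a b : Fin nA, ¬ G.Adj (.inl a) (.inl b)) ∧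
      (∀ a b : Fin nB, ¬ G.Adj (.inr a) (.inr b)) ∧
      (∀ v : Fin nA ⊕ Fin nB, (G.neighborSet v).ncard ≤ D) ∧
      (∀ i : Fin sA, {v | pA v = i}.ncard = m) ∧
      (∀ j : Fin sB, {v | pB v = j}.ncard = m) ∧
      ¬ HasIT G (Sum.map pA pB) := by
  let eα := (Finite.equivFin α).symm
  let eβ := (Finite.equivFin β).symm
  let eI := Finite.equivFin I
  let eJ := Finite.equivFin J
  let e := Equiv.sumCongr eα eβ
  have hp : Sum.map (eI ∘ pA ∘ eα) (eJ ∘ pB ∘ eβ) = eI.sumCongr eJ ∘ Sum.map pA pB ∘ e := by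
    funext v; cases v <;> rfl
  refine ⟨_, _, _, _, G.comap e, eI ∘ pA ∘ eα, eJ ∘ pB ∘ eβ, fun a a' => hAA _ _,
    fun b b' => hBB _ _, fun v => ?_,
    fun i => (ncard_fiber_equiv_comp pA eα eI i).trans (hpA _),
    fun j => (ncard_fiber_equiv_comp pB eβ eJ j).trans (hpB _),
    fun h => hIT ((hp ▸ h).of_comap e (eI.sumCongr eJ))⟩
  rw [SimpleGraph.neighborSet_comap,
    Set.ncard_preimage_of_injective_subset_range e.injective (by simp)]
  exact hdeg _

namespace ChainExample

variable (k : ℕ)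

abbrev Slot := Fin k ⊕ Fin (k + 1)

/- `none` is the root class and `some (t, j)` the link `2j + 1` of chain `t`; on side `B`,
`(t, some j)` is the link `2j` of chain `t` and `(t, none)` its terminal class. -/
abbrev ClassA := Option (Bool × Fin k)

abbrev ClassB := Bool × Option (Fin k)

def linkLabel (t : Bool) (n : ℕ) : Slot k → Bool × ℕ
  | .inl _ => (t, n)
  | .inr _ => (t, n + 1)

def labelA : ClassA k → Slot k → Bool × ℕ
  | none, .inl _ => (true, 0)
  | none, .inr _ => (false, 0)
  | some (t, j), s => linkLabel k t (2 * j + 1) s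

def labelB : ClassB k → Slot k → Bool × ℕ
  | (t, some j), s => linkLabel k t (2 * j) s
  | (t, none), .inl i => (t, 2 * i)
  | (t, none), .inr _ => (t, 2 * k)

def slotIndex : Slot k → Fin (k + 1)
  | .inl i => i.castSucc
  | .inr i => i

/- A label `(t, 2i)` with `i < k` occurs `k` times in link `2i` and once more in the terminal
class, which therefore gets the index `k` left over by the link. -/
def copyIndexB : ClassB k → Slot k → Fin (k + 1)
  | (_, none), .inl _ => Fin.last k
  | _, s => slotIndex k s

variable {k}

theorem linkLabel_eq_of_ne {t : Bool} {n : ℕ} {s : Slot k} (h : linkLabel k t n s ≠ (t, n)) :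
    linkLabel k t n s = (t, n + 1) := by
  cases s
  · exact absurd rfl h
  · rfl

theorem eq_of_labelA_eq_of_slotIndex_eq (v v' : ClassA k × Slot k)
    (hl : Function.uncurry (labelA k) v = Function.uncurry (labelA k) v')
    (hw : slotIndex k v.2 = slotIndex k v'.2) : v = v' := by
  obtain ⟨_ | ⟨t, j⟩, i | i⟩ := v <;> obtain ⟨_ | ⟨t', j'⟩, i' | i'⟩ := v' <;>
    simp only [Function.uncurry_apply_pair, labelA, linkLabel, slotIndex, Prod.mk.injEq,
      Fin.ext_iff, Fin.val_castSucc, Sum.inl.injEq, Sum.inr.injEq, Option.some.injEq,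
      reduceCtorEq] at hl hw ⊢ <;> grind

theorem eq_of_labelB_eq_of_copyIndexB_eq (v v' : ClassB k × Slot k)
    (hl : Function.uncurry (labelB k) v = Function.uncurry (labelB k) v')
    (hw : Function.uncurry (copyIndexB k) v = Function.uncurry (copyIndexB k) v') : v = v' := by
  obtain ⟨⟨t, _ | j⟩, i | i⟩ := v <;> obtain ⟨⟨t', _ | j'⟩, i' | i'⟩ := v' <;>
    simp only [Function.uncurry_apply_pair, labelB, copyIndexB, linkLabel, slotIndex,
      Prod.mk.injEq, Fin.ext_iff, Fin.val_castSucc, Fin.val_last, Sum.inl.injEq, Sum.inr.injEq,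
      Option.some.injEq, reduceCtorEq] at hl hw ⊢ <;> grind

theorem labels_meet (sA : ClassA k → Slot k) (sB : ClassB k → Slot k) :
    ∃ c c', labelA k c (sA c) = labelB k c' (sB c') := by
  by_contra! hdisj
  obtain ⟨t, hroot⟩ : ∃ t, labelA k none (sA none) = (t, 0) := by
    cases sA none <;> exact ⟨_, rfl⟩
  have hownA : ∀ j ≤ k, ∃ c, labelA k c (sA c) = (t, 2 * j) := by
    intro j
    induction j with
    | zero => exact fun _ => ⟨none, hroot⟩
    | succ j ih =>
      intro hj
      obtain ⟨c, hc⟩ := ih (by omega)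
      let jj : Fin k := ⟨j, hj⟩
      have hB : labelB k (t, some jj) (sB (t, some jj)) = (t, 2 * j + 1) :=
        linkLabel_eq_of_ne fun h => hdisj c (t, some jj) (hc.trans h.symm)
      exact ⟨some (t, jj),
        linkLabel_eq_of_ne fun h => hdisj (some (t, jj)) (t, some jj) (h.trans hB.symm)⟩
  obtain ⟨c, hc⟩ : ∃ c, labelA k c (sA c) = labelB k (t, none) (sB (t, none)) := by
    rcases sB (t, none) with i | i
    · exact hownA i i.2.le
    · exact hownA k le_rfl
  exact hdisj c _ hc
theorem card_labelA_fiber_le (x : Bool × ℕ) :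
    Nat.card {v // Function.uncurry (labelA k) v = x} ≤ k + 1 := by
  simpa using Nat.card_fiber_le_of_injective _ (fun v : ClassA k × Slot k => slotIndex k v.2)
    eq_of_labelA_eq_of_slotIndex_eq x

theorem card_labelB_fiber_le (x : Bool × ℕ) :
    Nat.card {v // Function.uncurry (labelB k) v = x} ≤ k + 1 := by
  simpa using Nat.card_fiber_le_of_injective _ (Function.uncurry (copyIndexB k))
    eq_of_labelB_eq_of_copyIndexB_eq x

theorem ncard_class {C : Type*} (c : C) :
    {v : C × Slot k | v.1 = c}.ncard = 2 * (k + 1) - 1 := by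
  rw [Set.ncard_setOf_fst_eq, Nat.card_sum]
  simp only [Nat.card_eq_fintype_card, Fintype.card_fin]
  omega

end ChainExample

open ChainExample

/-- Symmetric sharpness: for every `D ≥ 1` there is a bipartite vertex-partitioned graph
(partition refining the bipartition) of maximum degree at most `D`, all classes of size
exactly `2D - 1`, with no independent transversal; i.e. the part-size condition `2D`
cannot be relaxed to `2D - 1`. -/
theorem stmt4 (D : ℕ) (hD : 0 < D) :
    ∃ (nA nB sA sB : ℕ) (G : SimpleGraph (Fin nA ⊕ Fin nB))
      (pA : Fin nA → Fin sA) (pB : Fin nB → Fin sB),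
      (∀ a b : Fin nA, ¬ G.Adj (.inl a) (.inl b)) ∧
      (∀ a b : Fin nB, ¬ G.Adj (.inr a) (.inr b)) ∧
      (∀ v : Fin nA ⊕ Fin nB, (G.neighborSet v).ncard ≤ D) ∧
      (∀ i : Fin sA, {v | pA v = i}.ncard = 2 * D - 1) ∧
      (∀ j : Fin sB, {v | pB v = j}.ncard = 2 * D - 1) ∧
      ¬ HasIT G (Sum.map pA pB) := by
  obtain ⟨k, rfl⟩ := Nat.exists_eq_add_one.mpr hD
  refine exists_fin_of_finite
    (labelGraph (Function.uncurry (labelA k)) (Function.uncurry (labelB k))) Prod.fst Prod.fst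
    (k + 1) _ labelGraph_adj_inl_inl labelGraph_adj_inr_inr
    (ncard_neighborSet_labelGraph_le card_labelA_fiber_le card_labelB_fiber_le)
    ncard_class ncard_class fun hIT => ?_
  obtain ⟨sA, sB, hdisj⟩ := exists_slots_of_hasIT hIT
  obtain ⟨c, c', hmeet⟩ := labels_meet sA sB
  exact hdisj c c' hmeet
end

section
/- If the bipartite list-colouring conjecture holds with constant C (i.e., every bipartite graph G with maximum degree Δ ≥ 2 satisfies χ_ℓ(G) ≤ C·log₂ Δ), then there exists a constant C' ≥ 1 such that for every D ≥ 2, every ⌈C'·log₂ D⌉-fold bipartite list-cover graph of maximum degree D admits an independent transversal. -/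
open Finset

def Choosable {V : Type} (G : SimpleGraph V) (k : ℕ) : Prop :=
  ∀ L : V → Finset ℕ, (∀ v, (L v).card = k) →
    ∃ c : V → ℕ, (∀ v, c v ∈ L v) ∧ ∀ v w, G.Adj v w → c v ≠ c w
noncomputable def listChromatic {V : Type} (G : SimpleGraph V) : ℕ :=
  sInf {k : ℕ | Choosable G k}
def IsBipartite {V : Type} (G : SimpleGraph V) : Prop :=
  ∃ s : V → Bool, ∀ a b, G.Adj a b → s a ≠ s b

namespace SimpleGraph
variable {V W : Type*}

lemma ncard_neighborSet_eq_degree (G : SimpleGraph V) [Fintype V] [DecidableRel G.Adj] (v : V) :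
    (G.neighborSet v).ncard = G.degree v := by
  rw [← card_neighborSet_eq_degree, Set.ncard_eq_toFinset_card', Set.toFinset_card]

def projection (H : SimpleGraph V) (P : V → W) : SimpleGraph W where
  Adj u w := u ≠ w ∧ ∃ x y, H.Adj x y ∧ P x = u ∧ P y = w
  symm := ⟨fun _ _ ⟨hne, x, y, hxy, hx, hy⟩ => ⟨hne.symm, y, x, hxy.symm, hy, hx⟩⟩
  loopless := ⟨fun _ h => h.1 rfl⟩

lemma projection_le {H : SimpleGraph V} {G : SimpleGraph W} {P : V → W}
    (h : ∀ a b, H.Adj a b → G.Adj (P a) (P b)) : H.projection P ≤ G := by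
  rintro u w ⟨-, x, y, hxy, rfl, rfl⟩
  exact h x y hxy

lemma degree_projection_le [Fintype V] [Fintype W] [DecidableEq W] (H : SimpleGraph V)
    [DecidableRel H.Adj] (P : V → W) [DecidableRel (H.projection P).Adj] {D : ℕ}
    (hD : ∀ x, H.degree x ≤ D) (v : W) :
    (H.projection P).degree v ≤ #{x | P x = v} * D := by
  calc (H.projection P).degree v
      ≤ #(({x | P x = v} : Finset V).biUnion fun x => (H.neighborFinset x).image P) := by
        refine card_le_card fun w hw => ?_
        obtain ⟨-, x, y, hxy, rfl, rfl⟩ := (mem_neighborFinset _ _ _).1 hw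
        exact mem_biUnion.2 ⟨x, by simp, mem_image_of_mem P (by simpa using hxy)⟩
    _ ≤ ∑ x ∈ {x | P x = v}, #((H.neighborFinset x).image P) := card_biUnion_le
    _ ≤ ∑ x ∈ {x | P x = v}, H.degree x := sum_le_sum fun x _ => card_image_le
    _ ≤ #{x | P x = v} * D := sum_le_card_nsmul _ _ _ fun x _ => hD x

end SimpleGraph

section Choosability
variable {V : Type} {G : SimpleGraph V}

lemma IsBipartite.anti {G' : SimpleGraph V} (hG : IsBipartite G) (h : G' ≤ G) :
    IsBipartite G' :=
  let ⟨s, hs⟩ := hG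
  ⟨s, fun a b hab => hs a b (h hab)⟩

lemma Choosable.mono {m k : ℕ} (h : Choosable G m) (hmk : m ≤ k) : Choosable G k := by
  intro L hL
  choose L' hL'L hL' using fun v => exists_subset_card_eq (s := L v) (hL v ▸ hmk)
  obtain ⟨c, hcL, hc⟩ := h L' hL'
  exact ⟨c, fun v => hL'L v (hcL v), hc⟩

lemma choosable_of_forall_degree_lt [Fintype V] [DecidableRel G.Adj] {k : ℕ}
    (hk : ∀ v, G.degree v < k) : Choosable G k := by
  classical
  intro L hL
  suffices ∀ s : Finset V, ∃ c : V → ℕ, (∀ v ∈ s, c v ∈ L v) ∧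
      ∀ v ∈ s, ∀ w ∈ s, G.Adj v w → c v ≠ c w by
    obtain ⟨c, hcL, hc⟩ := this univ
    exact ⟨c, fun v => hcL v (mem_univ v), fun v w => hc v (mem_univ v) w (mem_univ w)⟩
  intro s
  induction s using Finset.induction with
  | empty => exact ⟨fun _ => 0, by simp, by simp⟩
  | insert a s ha ih =>
    obtain ⟨c, hcL, hc⟩ := ih
    obtain ⟨b, hbL, hb⟩ : ∃ b ∈ L a, b ∉ (G.neighborFinset a).image c :=
      exists_mem_notMem_of_card_lt_card (card_image_le.trans_lt (hL a ▸ hk a))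
    have hbc : ∀ w, G.Adj a w → b ≠ c w := fun w haw hbw =>
      hb (mem_image.2 ⟨w, (G.mem_neighborFinset a w).2 haw, hbw.symm⟩)
    refine ⟨Function.update c a b, ?_, ?_⟩
    · intro v hv
      rcases mem_insert.1 hv with rfl | hv
      · simpa using hbL
      · simpa [Function.update_of_ne (ne_of_mem_of_not_mem hv ha)] using hcL v hv
    · intro v hv w hw hvw
      rcases mem_insert.1 hv with rfl | hvs <;> rcases mem_insert.1 hw with rfl | hws
      · exact absurd hvw G.irrefl
      · simpa [Function.update_of_ne (ne_of_mem_of_not_mem hws ha)] using hbc w hvw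
      · simpa [Function.update_of_ne (ne_of_mem_of_not_mem hvs ha)] using (hbc v hvw.symm).symm
      · simpa [Function.update_of_ne (ne_of_mem_of_not_mem hvs ha),
          Function.update_of_ne (ne_of_mem_of_not_mem hws ha)] using hc v hvs w hws hvw

lemma choosable_of_maxDegree_lt [Fintype V] [DecidableRel G.Adj] {k : ℕ}
    (hk : G.maxDegree < k) : Choosable G k :=
  choosable_of_forall_degree_lt fun v => (G.degree_le_maxDegree v).trans_lt hk

lemma choosable_listChromatic [Fintype V] : Choosable G (listChromatic G) := by
  classical
  exact Nat.sInf_mem (s := {k | Choosable G k})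
    ⟨_, choosable_of_maxDegree_lt (Nat.lt_succ_self G.maxDegree)⟩

lemma choosable_of_listChromatic_le [Fintype V] {k : ℕ} (hk : listChromatic G ≤ k) :
    Choosable G k :=
  choosable_listChromatic.mono hk

end Choosability

lemma one_le_logb_two {D : ℝ} (hD : 2 ≤ D) : 1 ≤ Real.logb 2 D := by
  simpa using Real.logb_le_logb_of_le one_lt_two two_pos hD

lemma logb_two_le_four_mul_sqrt {x : ℝ} (hx : 0 ≤ x) : Real.logb 2 x ≤ 4 * √x := by
  have hlog : Real.log x ≤ 2 * √x := by
    rcases hx.eq_or_lt with rfl | hpos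
    · simp
    have := Real.log_le_sub_one_of_pos (Real.sqrt_pos.2 hpos)
    rw [Real.log_sqrt hx] at this
    linarith
  have hlog2 : (1 / 2 : ℝ) < Real.log 2 := by linarith [Real.log_two_gt_d9]
  rw [Real.logb, div_le_iff₀ (by linarith)]
  nlinarith [Real.sqrt_nonneg x]

lemma mul_logb_mul_le {C D k : ℝ} (hC : 1 ≤ C) (hD : 2 ≤ D)
    (hk : 64 * C ^ 2 * Real.logb 2 D ≤ k) : C * Real.logb 2 (k * D) ≤ k := by
  have hlogD := one_le_logb_two hD
  have hkpos : 0 < k := by nlinarith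
  have hsqrt : 8 * C ≤ √k := Real.le_sqrt_of_sq_le (by nlinarith)
  have hlogk : C * Real.logb 2 k ≤ k / 2 :=
    calc C * Real.logb 2 k ≤ C * (4 * √k) := by gcongr; exact logb_two_le_four_mul_sqrt hkpos.le
      _ ≤ √k / 2 * √k := by nlinarith [Real.sqrt_nonneg k]
      _ = k / 2 := by rw [div_mul_eq_mul_div, Real.mul_self_sqrt hkpos.le]
  have hlogD' : C * Real.logb 2 D ≤ k / 2 := by nlinarith
  rw [Real.logb_mul hkpos.ne' (by positivity), mul_add]
  linarith

lemma hasIT_of_choosable_projection {V W : Type} [Fintype V] {H : SimpleGraph V} {P : V → W}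
    {col : V → ℕ} {k : ℕ} (hcol : ∀ a b, H.Adj a b → col a = col b)
    (hinj : ∀ a b, P a = P b → col a = col b → a = b) (hfib : ∀ v, {x | P x = v}.ncard = k)
    (hk : Choosable (H.projection P) k) : HasIT H P := by
  classical
  obtain ⟨c, hcL, hc⟩ := hk (fun v => ({x | P x = v} : Finset V).image col) fun v => by
    rw [card_image_of_injOn fun a ha b hb => hinj a b (by simp_all), ← hfib v,
      ← Set.ncard_coe_finset, coe_filter_univ]
  choose f hfP hfc using fun v => by simpa using hcL v
  refine ⟨f, hfP, fun i j hij => ?_⟩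
  have hne : i ≠ j := by rintro rfl; exact H.irrefl hij
  exact hc i j ⟨hne, f i, f j, hij, hfP i, hfP j⟩ (by rw [← hfc, ← hfc, hcol _ _ hij])

/-- If every bipartite graph `G` with maximum degree `Δ ≥ 2` satisfies
`χ_ℓ(G) ≤ C·log₂ Δ`, then there is `C' ≥ 1` such that for every `D ≥ 2`, every
`⌈C'·log₂ D⌉`-fold bipartite list-cover graph of maximum degree `D` admits an
independent transversal. A list-cover of `G` is a graph `H` with partition map
`P : V(H) → V(G)` and a colour map `col : V(H) → ℕ` injective on fibers, whose
edges run only along edges of `G` and between equal colours. -/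
theorem stmt10 (C : ℝ) (hC : 1 ≤ C)
    (hconj : ∀ (V : Type) [Fintype V] (G : SimpleGraph V) [DecidableRel G.Adj],
      IsBipartite G → 2 ≤ G.maxDegree →
      (listChromatic G : ℝ) ≤ C * Real.logb 2 (G.maxDegree)) :
    ∃ C' : ℝ, 1 ≤ C' ∧
      ∀ D : ℕ, 2 ≤ D →
      ∀ (VG VH : Type) [Fintype VG] [Fintype VH]
        (G : SimpleGraph VG) (H : SimpleGraph VH) (P : VH → VG) (col : VH → ℕ),
        IsBipartite G →
        (∀ a b, H.Adj a b → G.Adj (P a) (P b) ∧ col a = col b) →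
        (∀ a b, P a = P b → col a = col b → a = b) →
        (∀ v : VG, {x | P x = v}.ncard = ⌈C' * Real.logb 2 (D : ℝ)⌉₊) →
        (∀ x : VH, (H.neighborSet x).ncard ≤ D) →
        HasIT H P := by
  refine ⟨64 * C ^ 2, by nlinarith, ?_⟩
  intro D hD VG VH _ _ G H P col hGbip hedge hinj hfib hdeg
  classical
  set k := ⌈64 * C ^ 2 * Real.logb 2 (D : ℝ)⌉₊
  have hk : 64 * C ^ 2 * Real.logb 2 D ≤ k := Nat.le_ceil _
  have hlogD := one_le_logb_two (D := D) (by exact_mod_cast hD)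
  have hk2 : 2 ≤ k := by exact_mod_cast (show (2 : ℝ) ≤ k by nlinarith)
  have hmax : (H.projection P).maxDegree ≤ k * D := by
    refine SimpleGraph.maxDegree_le_of_forall_degree_le _ _ fun v => ?_
    have := H.degree_projection_le P (fun x => H.ncard_neighborSet_eq_degree x ▸ hdeg x) v
    rwa [← Set.ncard_coe_finset, coe_filter_univ, hfib] at this
  refine hasIT_of_choosable_projection (fun a b h => (hedge a b h).2) hinj hfib ?_
  rcases lt_or_ge (H.projection P).maxDegree 2 with hsmall | hlarge
  · exact choosable_of_maxDegree_lt (by omega)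
  suffices (listChromatic (H.projection P) : ℝ) ≤ k from
    choosable_of_listChromatic_le (by exact_mod_cast this)
  calc (listChromatic (H.projection P) : ℝ)
      ≤ C * Real.logb 2 (H.projection P).maxDegree :=
        hconj VG _ (hGbip.anti (SimpleGraph.projection_le fun a b h => (hedge a b h).1)) hlarge
    _ ≤ C * Real.logb 2 (k * D) := by
        gcongr
        · norm_num
        · exact_mod_cast hmax
    _ ≤ k := mul_logb_mul_le hC (by exact_mod_cast hD) hk
end

section
/- For every positive integer D, setting m = D², there exists a bipartite graph J with parts A and B of maximum degree D, where B is partitioned into designated pairs with no vertex of A adjacent to both vertices of any pair, such that the derived graph H'(J) on vertex set A — where for each pair (x, y) in B every vertex of N_J(x) is joined to every vertex of N_J(y) — is the complete bipartite graph K_{m,m}. -/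
/-!
Take `A = A₁ ∪ … ∪ A_D ∪ C₁ ∪ … ∪ C_D` with blocks of size `D`, and for every `(i, j)` a
pair `(x_i, y_j)` with `N(x_i) = A_i` and `N(y_j) = C_j`. Each `A`-vertex lies in `D` pairs and each
`B`-vertex sees one block, so `Δ(J) = D`; the two ends of a pair see disjoint blocks; and since
every pair joins some `A_i` to some `C_j`, with every `(i, j)` occurring, the derived graph is the
complete bipartite graph between `⋃ A_i` and `⋃ C_j`, i.e. `K_{D², D²}`.
-/

open Function Set

variable {α β γ : Type*}

lemma Equiv.ncard_preimage (e : α ≃ β) (s : Set β) : (e ⁻¹' s).ncard = s.ncard :=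
  ncard_preimage_of_injective_subset_range e.injective (by simp)

namespace SimpleGraph

lemma ncard_neighborSet_comap_equiv (G : SimpleGraph β) (e : α ≃ β) (v : α) :
    ((G.comap e).neighborSet v).ncard = (G.neighborSet (e v)).ncard := by
  rw [neighborSet_comap, Equiv.ncard_preimage]

def bipartiteOfRel (r : α → β → Prop) : SimpleGraph (α ⊕ β) where
  Adj
    | .inl a, .inr b => r a b
    | .inr b, .inl a => r a b
    | _, _ => False
  symm := ⟨by rintro (a | b) (a' | b') h <;> exact h⟩
  loopless := ⟨by rintro (a | b) h <;> exact h⟩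

section bipartiteOfRel

variable (r : α → β → Prop)

@[simp] lemma bipartiteOfRel_adj_inl_inr (a : α) (b : β) :
    (bipartiteOfRel r).Adj (.inl a) (.inr b) ↔ r a b := Iff.rfl

@[simp] lemma bipartiteOfRel_adj_inr_inl (a : α) (b : β) :
    (bipartiteOfRel r).Adj (.inr b) (.inl a) ↔ r a b := Iff.rfl

lemma not_bipartiteOfRel_adj_inl_inl (a a' : α) : ¬ (bipartiteOfRel r).Adj (.inl a) (.inl a') :=
  id

lemma not_bipartiteOfRel_adj_inr_inr (b b' : β) : ¬ (bipartiteOfRel r).Adj (.inr b) (.inr b') :=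
  id

lemma ncard_neighborSet_bipartiteOfRel_inl (a : α) :
    ((bipartiteOfRel r).neighborSet (.inl a)).ncard = {b | r a b}.ncard := by
  have : (bipartiteOfRel r).neighborSet (.inl a) = Sum.inr '' {b | r a b} := by
    ext (a' | b) <;> simp [mem_neighborSet, not_bipartiteOfRel_adj_inl_inl]
  rw [this, ncard_image_of_injective _ Sum.inr_injective]

lemma ncard_neighborSet_bipartiteOfRel_inr (b : β) :
    ((bipartiteOfRel r).neighborSet (.inr b)).ncard = {a | r a b}.ncard := by
  have : (bipartiteOfRel r).neighborSet (.inr b) = Sum.inl '' {a | r a b} := by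
    ext (a | b') <;> simp [mem_neighborSet, not_bipartiteOfRel_adj_inr_inr]
  rw [this, ncard_image_of_injective _ Sum.inl_injective]

end bipartiteOfRel

def derivedGraph (J : SimpleGraph (α ⊕ β)) (p : β → γ) : SimpleGraph α :=
  fromRel fun z w => ∃ x y : β,
    p x = p y ∧ x ≠ y ∧ J.Adj (.inl z) (.inr x) ∧ J.Adj (.inl w) (.inr y)

lemma derivedGraph_comap_adj {α' β' γ' : Type*} (J : SimpleGraph (α ⊕ β)) (p : β → γ)
    (e : α' ≃ α) (f : β' ≃ β) (g : γ ≃ γ') (z w : α') :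
    (derivedGraph (J.comap (e.sumCongr f)) (g ∘ p ∘ f)).Adj z w ↔
      (derivedGraph J p).Adj (e z) (e w) := by
  simp only [derivedGraph, fromRel_adj, comap_adj, Equiv.sumCongr_apply, Sum.map_inl,
    Sum.map_inr, comp_apply, g.injective.eq_iff, e.injective.ne_iff, ← f.injective.ne_iff]
  rw [← f.exists_congr_right]
  simp_rw [← f.exists_congr_right]

/-- The pairs of `B` are the fibres of `p`, and `σ` is the bipartition of `derivedGraph J p`. -/
structure RealizesKmm (D m : ℕ) (J : SimpleGraph (α ⊕ β)) (p : β → γ) (σ : α → Bool) :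
    Prop where
  card_eq : Nat.card α = 2 * m
  not_adj_inl_inl : ∀ a b : α, ¬ J.Adj (.inl a) (.inl b)
  not_adj_inr_inr : ∀ a b : β, ¬ J.Adj (.inr a) (.inr b)
  ncard_neighborSet_le : ∀ v, (J.neighborSet v).ncard ≤ D
  exists_ncard_neighborSet_eq : ∃ v, (J.neighborSet v).ncard = D
  ncard_fiber : ∀ j, {v | p v = j}.ncard = 2
  not_adj_pair : ∀ (a : α) (x y : β), p x = p y → x ≠ y →
    ¬ (J.Adj (.inl a) (.inr x) ∧ J.Adj (.inl a) (.inr y))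
  ncard_true : {z | σ z = true}.ncard = m
  ncard_false : {z | σ z = false}.ncard = m
  derivedGraph_adj_iff : ∀ z w, (derivedGraph J p).Adj z w ↔ σ z ≠ σ w

lemma RealizesKmm.comap {α' β' γ' : Type*} {D m : ℕ} {J : SimpleGraph (α ⊕ β)} {p : β → γ}
    {σ : α → Bool} (h : RealizesKmm D m J p σ) (e : α' ≃ α) (f : β' ≃ β) (g : γ ≃ γ') :
    RealizesKmm D m (J.comap (e.sumCongr f)) (g ∘ p ∘ f) (σ ∘ e) where
  card_eq := (Nat.card_congr e).trans h.card_eq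
  not_adj_inl_inl a b := h.not_adj_inl_inl (e a) (e b)
  not_adj_inr_inr a b := h.not_adj_inr_inr (f a) (f b)
  ncard_neighborSet_le v :=
    (ncard_neighborSet_comap_equiv J _ v).trans_le (h.ncard_neighborSet_le _)
  exists_ncard_neighborSet_eq := by
    obtain ⟨v, hv⟩ := h.exists_ncard_neighborSet_eq
    refine ⟨(e.sumCongr f).symm v, ?_⟩
    rw [ncard_neighborSet_comap_equiv, Equiv.apply_symm_apply, hv]
  ncard_fiber j := by
    rw [show {v | (g ∘ p ∘ f) v = j} = f ⁻¹' {b | p b = g.symm j} by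
      ext; simp [Equiv.eq_symm_apply], Equiv.ncard_preimage, h.ncard_fiber]
  not_adj_pair a x y hxy hne :=
    h.not_adj_pair (e a) (f x) (f y) (g.injective hxy) (f.injective.ne hne)
  ncard_true := (e.ncard_preimage _).trans h.ncard_true
  ncard_false := (e.ncard_preimage _).trans h.ncard_false
  derivedGraph_adj_iff z w :=
    (derivedGraph_comap_adj J p e f g z w).trans (h.derivedGraph_adj_iff _ _)

end SimpleGraph

namespace KmmConstruction

open SimpleGraph

variable (ι : Type*)

/-- `(i, j, false)` is `x_i` and `(i, j, true)` is `y_j` in the pair `B_{ij}`. -/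
def blockOf : ι × ι × Bool → ι
  | (i, _, false) => i
  | (_, j, true) => j

/-- The `A`-vertex `(false, i, k)` is the `k`-th vertex of `A_i`, and `(true, j, k)` that of
`C_j`; a `B`-vertex sees the whole block `blockOf` on its side. -/
def graph : SimpleGraph ((Bool × ι × ι) ⊕ (ι × ι × Bool)) :=
  bipartiteOfRel fun a b => b.2.2 = a.1 ∧ blockOf ι b = a.2.1

def pairIndex (b : ι × ι × Bool) : ι × ι := (b.1, b.2.1)

variable {ι}

lemma ncard_neighborSet (v : (Bool × ι × ι) ⊕ (ι × ι × Bool)) :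
    ((graph ι).neighborSet v).ncard = Nat.card ι := by
  rcases v with ⟨s, l, k⟩ | b
  · rw [graph, ncard_neighborSet_bipartiteOfRel_inl]
    cases s
    · rw [show {b : ι × ι × Bool | b.2.2 = false ∧ blockOf ι b = l} =
          range fun j => (l, j, false) by ext ⟨i, j, t⟩; cases t <;> grind [blockOf]]
      exact ncard_range_of_injective fun j j' h => by simpa using h
    · rw [show {b : ι × ι × Bool | b.2.2 = true ∧ blockOf ι b = l} =
          range fun i => (i, l, true) by ext ⟨i, j, t⟩; cases t <;> grind [blockOf]]
      exact ncard_range_of_injective fun i i' h => by simpa using h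
  · rw [graph, ncard_neighborSet_bipartiteOfRel_inr,
      show {a : Bool × ι × ι | b.2.2 = a.1 ∧ blockOf ι b = a.2.1} =
        range fun k => (b.2.2, blockOf ι b, k) by ext ⟨s, l, k⟩; simp]
    exact ncard_range_of_injective fun k k' h => by simpa using h

lemma ncard_pairIndex_fiber (q : ι × ι) : {b | pairIndex ι b = q}.ncard = 2 := by
  rw [show {b | pairIndex ι b = q} = {(q.1, q.2, false), (q.1, q.2, true)} by
    ext ⟨i, j, t⟩; cases t <;> simp [pairIndex, Prod.ext_iff]]
  exact ncard_pair (by simp)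

lemma side_ne_of_pairIndex_eq {x y : ι × ι × Bool} (hxy : pairIndex ι x = pairIndex ι y)
    (hne : x ≠ y) : x.2.2 ≠ y.2.2 := by
  obtain ⟨i, j, s⟩ := x
  obtain ⟨i', j', t⟩ := y
  simp_all [pairIndex]

lemma ncard_side (s : Bool) : {z : Bool × ι × ι | z.1 = s}.ncard = Nat.card ι ^ 2 := by
  rw [show {z : Bool × ι × ι | z.1 = s} = range (Prod.mk s) by ext ⟨t, q⟩; simp [eq_comm],
    ncard_range_of_injective (Prod.mk_right_injective s), Nat.card_prod, sq]

/-- Every pair `B_{ij}` joins `A_i` to `C_j`, and every `(i, j)` occurs. -/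
lemma exists_pair_adj_iff (z w : Bool × ι × ι) :
    (∃ x y, pairIndex ι x = pairIndex ι y ∧ x ≠ y ∧
      (graph ι).Adj (.inl z) (.inr x) ∧ (graph ι).Adj (.inl w) (.inr y)) ↔ z.1 ≠ w.1 := by
  constructor
  · rintro ⟨x, y, hxy, hne, ⟨hzx, -⟩, ⟨hwy, -⟩⟩
    rw [← hzx, ← hwy]
    exact side_ne_of_pairIndex_eq hxy hne
  · obtain ⟨s, l, k⟩ := z
    obtain ⟨t, l', k'⟩ := w
    rintro (hst : s ≠ t)
    cases s <;> cases t <;> simp at hst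
    · exact ⟨(l, l', false), (l, l', true), rfl, by simp, ⟨rfl, rfl⟩, ⟨rfl, rfl⟩⟩
    · exact ⟨(l', l, true), (l', l, false), rfl, by simp, ⟨rfl, rfl⟩, ⟨rfl, rfl⟩⟩

theorem realizesKmm [Nonempty ι] :
    RealizesKmm (Nat.card ι) (Nat.card ι ^ 2) (graph ι) (pairIndex ι) Prod.fst where
  card_eq := by
    rw [Nat.card_prod, Nat.card_prod, Nat.card_eq_fintype_card (α := Bool), Fintype.card_bool]
    ring
  not_adj_inl_inl := not_bipartiteOfRel_adj_inl_inl _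
  not_adj_inr_inr := not_bipartiteOfRel_adj_inr_inr _
  ncard_neighborSet_le v := (ncard_neighborSet v).le
  exists_ncard_neighborSet_eq := ⟨.inl (false, Classical.arbitrary ι, Classical.arbitrary ι),
    ncard_neighborSet _⟩
  ncard_fiber := ncard_pairIndex_fiber
  not_adj_pair a x y hxy hne := fun ⟨⟨hax, _⟩, ⟨hay, _⟩⟩ =>
    side_ne_of_pairIndex_eq hxy hne (hax.trans hay.symm)
  ncard_true := ncard_side true
  ncard_false := ncard_side false
  derivedGraph_adj_iff z w := by
    rw [derivedGraph, fromRel_adj, exists_pair_adj_iff, exists_pair_adj_iff, ne_comm (a := w.1),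
      or_self, and_iff_right_iff_imp]
    rintro hzw rfl
    exact hzw rfl

end KmmConstruction

/-- Construction of `J` with `Δ(J) = D` whose derived graph `H'(J)` is `K_{m,m}` with
`m = D²`: the `B`-side is partitioned into pairs, no vertex of `A` is adjacent to both
vertices of a pair, and the derived graph on `A` (joining `N(x)` to `N(y)` completely
for each pair `(x,y)`) is complete bipartite with sides of size `D²`. -/
theorem stmt12 (D : ℕ) (hD : 0 < D) :
    ∃ (nA nB sB : ℕ) (J : SimpleGraph (Fin nA ⊕ Fin nB)) (pB : Fin nB → Fin sB),
      nA = 2 * D ^ 2 ∧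
      (∀ a b : Fin nA, ¬ J.Adj (.inl a) (.inl b)) ∧
      (∀ a b : Fin nB, ¬ J.Adj (.inr a) (.inr b)) ∧
      (∀ v : Fin nA ⊕ Fin nB, (J.neighborSet v).ncard ≤ D) ∧
      (∃ v : Fin nA ⊕ Fin nB, (J.neighborSet v).ncard = D) ∧
      (∀ j : Fin sB, {v | pB v = j}.ncard = 2) ∧
      (∀ (a : Fin nA) (x y : Fin nB), pB x = pB y → x ≠ y →
        ¬ (J.Adj (.inl a) (.inr x) ∧ J.Adj (.inl a) (.inr y))) ∧
      ∃ σ : Fin nA → Bool,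
        {z | σ z = true}.ncard = D ^ 2 ∧ {z | σ z = false}.ncard = D ^ 2 ∧
        ∀ z w : Fin nA,
          (SimpleGraph.fromRel (fun z w => ∃ x y : Fin nB,
            pB x = pB y ∧ x ≠ y ∧ J.Adj (.inl z) (.inr x) ∧ J.Adj (.inl w) (.inr y))).Adj z w
          ↔ σ z ≠ σ w := by
  have : Nonempty (Fin D) := ⟨⟨0, hD⟩⟩
  have h := (KmmConstruction.realizesKmm (ι := Fin D)).comap (Finite.equivFin _).symm
    (Finite.equivFin _).symm (Finite.equivFin (Fin D × Fin D))
  rw [Nat.card_fin D] at h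
  exact ⟨_, _, _, _, _, (Nat.card_fin _).symm.trans h.card_eq, h.not_adj_inl_inl,
    h.not_adj_inr_inr, h.ncard_neighborSet_le, h.exists_ncard_neighborSet_eq, h.ncard_fiber,
    h.not_adj_pair, _, h.ncard_true, h.ncard_false, h.derivedGraph_adj_iff⟩
end

section
/- Let H be a bipartite graph with parts A and B, where B is partitioned into designated pairs (x, y) such that no vertex of A is adjacent to both x and y. Suppose A is further partitioned into blocks, and the derived graph H'(H) on A (with edges N_H(x) × N_H(y) for each pair (x, y)) has no independent transversal with respect to the blocks. Then H has no independent transversal with respect to the partition of V(H) consisting of the blocks of A and the designated pairs of B. -/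
/-!
Restrict an independent transversal of `H` to the blocks of `A`. If two of the chosen
vertices `a ∈ N(x)`, `a' ∈ N(y)` were adjacent in `H'(H)` through the pair `{x, y}`, then the
vertex chosen from that pair is `x` or `y`, and it is adjacent in `H` to `a` or to `a'`
respectively. So the restriction is an independent transversal of `H'(H)`.
-/

theorem Set.eq_or_eq_of_ncard_eq_two {α : Type*} {s : Set α} {x y z : α} (hs : s.ncard = 2)
    (hx : x ∈ s) (hy : y ∈ s) (hne : x ≠ y) (hz : z ∈ s) : z = x ∨ z = y := by
  obtain ⟨a, b, -, rfl⟩ := Set.ncard_eq_two.mp hs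
  simp only [Set.mem_insert_iff, Set.mem_singleton_iff] at hx hy hz
  grind

theorem Sum.exists_map_eq_of_leftInverse_map {VA VB ιA ιB : Type*} {pA : VA → ιA}
    {pB : VB → ιB} {f : ιA ⊕ ιB → VA ⊕ VB} (hf : Function.LeftInverse (Sum.map pA pB) f) :
    ∃ (g : ιA → VA) (k : ιB → VB), (∀ i, pA (g i) = i) ∧ (∀ j, pB (k j) = j) ∧
      Sum.map g k = f := by
  have hl : ∀ i, ∃ a, f (.inl i) = .inl a ∧ pA a = i := fun i => by
    have := hf (.inl i); revert this; cases f (.inl i) <;> simp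
  have hr : ∀ j, ∃ b, f (.inr j) = .inr b ∧ pB b = j := fun j => by
    have := hf (.inr j); revert this; cases f (.inr j) <;> simp
  choose g hfg hg using hl
  choose k hfk hk using hr
  exact ⟨g, k, hg, hk, funext fun | .inl i => (hfg i).symm | .inr j => (hfk j).symm⟩

section DerivedGraph

variable {VA VB ιA ιB : Type*} (H : SimpleGraph (VA ⊕ VB)) (pB : VB → ιB)

/-- The graph `H'(H)` on the `A`-side; the designated pairs of `B` are the fibres of `pB`. -/
def derivedGraph : SimpleGraph VA :=
  SimpleGraph.fromRel fun z w => ∃ x y : VB,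
    pB x = pB y ∧ x ≠ y ∧ H.Adj (.inl z) (.inr x) ∧ H.Adj (.inl w) (.inr y)

variable {H pB}

theorem not_derivedGraph_adj (hpairs : ∀ j, {v | pB v = j}.ncard = 2) {g : ιA → VA}
    {k : ιB → VB} (hk : ∀ j, pB (k j) = j) (hind : ∀ i j, ¬ H.Adj (.inl (g i)) (.inr (k j)))
    (i i' : ιA) : ¬ (derivedGraph H pB).Adj (g i) (g i') := by
  have hrel : ∀ i i', ¬ ∃ x y : VB,
      pB x = pB y ∧ x ≠ y ∧ H.Adj (.inl (g i)) (.inr x) ∧ H.Adj (.inl (g i')) (.inr y) := by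
    rintro i i' ⟨x, y, hxy, hne, hx, hy⟩
    rcases Set.eq_or_eq_of_ncard_eq_two (hpairs (pB x)) rfl hxy.symm hne (hk (pB x))
      with hkx | hky
    · exact hind i (pB x) (by rwa [hkx])
    · exact hind i' (pB x) (by rwa [hky])
  rintro ⟨-, h | h⟩
  exacts [hrel i i' h, hrel i' i h]

end DerivedGraph

theorem stmt13_general {VA VB ιA ιB : Type*} (H : SimpleGraph (VA ⊕ VB))
    (pA : VA → ιA) (pB : VB → ιB)
    (hpairs : ∀ j : ιB, {v | pB v = j}.ncard = 2)
    (hder : ¬ HasIT (SimpleGraph.fromRel (fun z w => ∃ x y : VB,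
      pB x = pB y ∧ x ≠ y ∧ H.Adj (.inl z) (.inr x) ∧ H.Adj (.inl w) (.inr y))) pA) :
    ¬ HasIT H (Sum.map pA pB) := by
  rintro ⟨f, hf, hindep⟩
  obtain ⟨g, k, hg, hk, rfl⟩ := Sum.exists_map_eq_of_leftInverse_map hf
  exact hder ⟨g, hg, not_derivedGraph_adj hpairs hk fun i j => hindep (.inl i) (.inr j)⟩

/-- If the derived graph `H'(H)` on the `A`-side (with complete bipartite edges
`N(x) × N(y)` for each designated pair `(x,y)` of the `B`-side, no vertex of `A`
adjacent to both vertices of a pair) has no independent transversal with respect to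
the blocks of `A`, then `H` has no independent transversal with respect to the
partition consisting of the blocks of `A` and the pairs of `B`. -/
theorem stmt13 {VA VB ιA ιB : Type*} (H : SimpleGraph (VA ⊕ VB))
    (hb1 : ∀ a b : VA, ¬ H.Adj (.inl a) (.inl b))
    (hb2 : ∀ a b : VB, ¬ H.Adj (.inr a) (.inr b))
    (pA : VA → ιA) (pB : VB → ιB)
    (hpairs : ∀ j : ιB, {v | pB v = j}.ncard = 2)
    (hnc : ∀ (a : VA) (x y : VB), pB x = pB y → x ≠ y →
      ¬ (H.Adj (.inl a) (.inr x) ∧ H.Adj (.inl a) (.inr y)))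
    (hder : ¬ HasIT (SimpleGraph.fromRel (fun z w => ∃ x y : VB,
      pB x = pB y ∧ x ≠ y ∧ H.Adj (.inl z) (.inr x) ∧ H.Adj (.inl w) (.inr y))) pA) :
    ¬ HasIT H (Sum.map pA pB) :=
  stmt13_general H pA pB hpairs hder
end

section
/- Let k_A, k_B, D_A, D_B be positive integers and let H be a bipartite vertex-partitioned graph (partition refining the bipartition A_H ∪ B_H) with no independent transversal, whose A-classes each have size at least k_A, whose B-classes each have size at least k_B, whose A_H-vertices have degree at most D_A and whose B_H-vertices have degree at most D_B. Suppose there are a classes in A_H and b classes in B_H, and a set Z of at most a + b − 1 edges whose endpoints dominate all a + b classes. Then a·k_A ≤ (a + b − 1)·D_B and b·k_B ≤ (a + b − 1)·D_A, and consequently D_A/k_B + D_B/k_A > 1. -/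
open Finset

lemma Fintype.card_mul_le_card_of_le_ncard_fiber {α ι : Type*} [Fintype α] [Fintype ι]
    (p : α → ι) {k : ℕ} (h : ∀ i, k ≤ {v | p v = i}.ncard) :
    Fintype.card ι * k ≤ Fintype.card α := by
  classical
  rw [mul_comm]
  refine Finset.mul_card_image_le_card_of_maps_to (fun v _ ↦ mem_univ (p v)) k fun i _ ↦ ?_
  simpa [Set.ncard_eq_toFinset_card'] using h i

lemma Set.ncard_le_card_mul_of_subset_biUnion {α ι : Type*} [Finite α] {A : Set α}
    {Z : Finset ι} {T : ι → Set α} {D : ℕ} (hA : A ⊆ ⋃ e ∈ Z, T e)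
    (hT : ∀ e ∈ Z, (T e).ncard ≤ D) : A.ncard ≤ #Z * D :=
  calc A.ncard ≤ (⋃ e ∈ Z, T e).ncard := Set.ncard_le_ncard hA
    _ ≤ ∑ e ∈ Z, (T e).ncard := Z.set_ncard_biUnion_le T
    _ ≤ ∑ _e ∈ Z, D := sum_le_sum hT
    _ = #Z * D := by rw [sum_const, smul_eq_mul]

namespace SimpleGraph

variable {V : Type*} {G : SimpleGraph V} {s t : Set V}

lemma isBipartiteWith_range_inl_range_inr {α β : Type*} {G : SimpleGraph (α ⊕ β)}
    (hl : ∀ a b : α, ¬ G.Adj (.inl a) (.inl b)) (hr : ∀ a b : β, ¬ G.Adj (.inr a) (.inr b)) :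
    G.IsBipartiteWith (Set.range Sum.inl) (Set.range Sum.inr) where
  disjoint := Set.isCompl_range_inl_range_inr.disjoint
  mem_of_adj v w hvw := by
    rcases v with a | b <;> rcases w with a' | b'
    exacts [(hl a a' hvw).elim, .inl ⟨⟨a, rfl⟩, ⟨b', rfl⟩⟩, .inr ⟨⟨b, rfl⟩, ⟨a', rfl⟩⟩,
      (hr b b' hvw).elim]

/-- The vertices of `s` dominated by the endpoints of an edge are neighbours of its
`t`-endpoint. -/
lemma IsBipartiteWith.ncard_dominated_by_edge_le [Finite V] (h : G.IsBipartiteWith s t)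
    {e : Sym2 V} (he : e ∈ G.edgeSet) {D : ℕ} (hdeg : ∀ w ∈ t, (G.neighborSet w).ncard ≤ D) :
    {v ∈ s | ∃ u ∈ e, G.Adj v u}.ncard ≤ D := by
  induction e using Sym2.ind with
  | h x y =>
    have subset_neighborSet : ∀ {x y}, y ∈ s →
        {v ∈ s | ∃ u ∈ s(x, y), G.Adj v u} ⊆ G.neighborSet x := by
      rintro x y hy v ⟨hv, u, hu, hvu⟩
      obtain rfl | rfl := Sym2.mem_iff.1 hu
      · exact hvu.symm
      · exact (Set.disjoint_left.1 h.disjoint hy (h.mem_of_mem_adj hv hvu)).elim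
    rcases h.mem_of_adj he with ⟨hx, hy⟩ | ⟨hx, hy⟩
    · rw [Sym2.eq_swap]
      exact (Set.ncard_le_ncard (subset_neighborSet hx)).trans (hdeg y hy)
    · exact (Set.ncard_le_ncard (subset_neighborSet hy)).trans (hdeg x hx)

lemma IsBipartiteWith.ncard_le_card_mul_of_dominates [Finite V] (h : G.IsBipartiteWith s t)
    {Z : Finset (Sym2 V)} (hZ : ∀ e ∈ Z, e ∈ G.edgeSet)
    (hdom : ∀ v ∈ s, ∃ e ∈ Z, ∃ u ∈ e, G.Adj v u) {D : ℕ}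
    (hdeg : ∀ w ∈ t, (G.neighborSet w).ncard ≤ D) : s.ncard ≤ #Z * D := by
  refine Set.ncard_le_card_mul_of_subset_biUnion (T := fun e ↦ {v ∈ s | ∃ u ∈ e, G.Adj v u})
    (fun v hv ↦ ?_) fun e he ↦ h.ncard_dominated_by_edge_le (hZ e he) hdeg
  obtain ⟨e, he, hdom⟩ := hdom v hv
  exact Set.mem_biUnion he ⟨hv, hdom⟩

end SimpleGraph

lemma one_lt_div_add_div_of_mul_le {a b m kA kB DA DB : ℕ} (hm : a + b = m + 1)
    (hkA : 0 < kA) (hkB : 0 < kB) (hA : a * kA ≤ m * DB) (hB : b * kB ≤ m * DA) :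
    1 < (DA : ℚ) / kB + DB / kA := by
  have hcross : kB * kA < DA * kA + kB * DB := by
    by_contra! hle
    have hsum : (m + 1) * (kA * kB) ≤ m * (DA * kA + kB * DB) := by
      rw [← hm]; nlinarith [Nat.mul_le_mul_right kB hA, Nat.mul_le_mul_right kA hB]
    nlinarith [Nat.mul_le_mul_left m hle, Nat.mul_pos hkA hkB]
  rw [div_add_div _ _ (by positivity) (by positivity), one_lt_div (by positivity)]
  exact_mod_cast hcross

theorem stmt14_general {VA VB ιA ιB : Type*} [Fintype VA] [Fintype VB]
    [Fintype ιA] [Fintype ιB] [Nonempty ιA]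
    (H : SimpleGraph (VA ⊕ VB))
    (hb1 : ∀ a b : VA, ¬ H.Adj (.inl a) (.inl b))
    (hb2 : ∀ a b : VB, ¬ H.Adj (.inr a) (.inr b))
    (kA kB DA DB : ℕ)
    (hkA : 0 < kA) (hkB : 0 < kB)
    (pA : VA → ιA) (pB : VB → ιB)
    (hsA : ∀ i : ιA, kA ≤ {v | pA v = i}.ncard)
    (hsB : ∀ j : ιB, kB ≤ {v | pB v = j}.ncard)
    (hdegA : ∀ a : VA, (H.neighborSet (.inl a)).ncard ≤ DA)
    (hdegB : ∀ b : VB, (H.neighborSet (.inr b)).ncard ≤ DB)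
    (Z : Finset (Sym2 (VA ⊕ VB)))
    (hZedges : ∀ e ∈ Z, e ∈ H.edgeSet)
    (hZcard : Z.card ≤ Fintype.card ιA + Fintype.card ιB - 1)
    (hdom : ∀ v : VA ⊕ VB, ∃ e ∈ Z, ∃ u ∈ e, H.Adj v u) :
    Fintype.card ιA * kA ≤ (Fintype.card ιA + Fintype.card ιB - 1) * DB ∧
    Fintype.card ιB * kB ≤ (Fintype.card ιA + Fintype.card ιB - 1) * DA ∧
    1 < (DA : ℚ) / kB + (DB : ℚ) / kA := by
  have hH := SimpleGraph.isBipartiteWith_range_inl_range_inr hb1 hb2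
  have hVA : Fintype.card VA ≤ Z.card * DB := by
    simpa [Set.ncard_range_of_injective Sum.inl_injective] using
      hH.ncard_le_card_mul_of_dominates hZedges (fun v _ ↦ hdom v)
        (by rintro _ ⟨b, rfl⟩; exact hdegB b)
  have hVB : Fintype.card VB ≤ Z.card * DA := by
    simpa [Set.ncard_range_of_injective Sum.inr_injective] using
      hH.symm.ncard_le_card_mul_of_dominates hZedges (fun v _ ↦ hdom v)
        (by rintro _ ⟨a, rfl⟩; exact hdegA a)
  have hA := (Fintype.card_mul_le_card_of_le_ncard_fiber pA hsA).trans
    (hVA.trans (Nat.mul_le_mul_right DB hZcard))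
  have hB := (Fintype.card_mul_le_card_of_le_ncard_fiber pB hsB).trans
    (hVB.trans (Nat.mul_le_mul_right DA hZcard))
  have ha : 0 < Fintype.card ιA := Fintype.card_pos
  exact ⟨hA, hB, one_lt_div_add_div_of_mul_le (by omega) hkA hkB hA hB⟩

/-- The counting argument in the proof of the main theorem: if a bipartite
vertex-partitioned graph with `a` `A`-classes of size at least `k_A`, `b` `B`-classes of
size at least `k_B`, `A`-degrees at most `D_A`, `B`-degrees at most `D_B`, has no IT and
admits a set `Z` of at most `a + b - 1` edges whose endpoints dominate every vertex,
then `a·k_A ≤ (a+b-1)·D_B`, `b·k_B ≤ (a+b-1)·D_A`, and hence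
`D_A/k_B + D_B/k_A > 1`. -/
theorem stmt14 {VA VB ιA ιB : Type*} [Fintype VA] [Fintype VB]
    [Fintype ιA] [Fintype ιB] [Nonempty ιA] [Nonempty ιB]
    (H : SimpleGraph (VA ⊕ VB))
    (hb1 : ∀ a b : VA, ¬ H.Adj (.inl a) (.inl b))
    (hb2 : ∀ a b : VB, ¬ H.Adj (.inr a) (.inr b))
    (kA kB DA DB : ℕ)
    (hkA : 0 < kA) (hkB : 0 < kB) (hDA : 0 < DA) (hDB : 0 < DB)
    (pA : VA → ιA) (pB : VB → ιB)
    (hsA : ∀ i : ιA, kA ≤ {v | pA v = i}.ncard)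
    (hsB : ∀ j : ιB, kB ≤ {v | pB v = j}.ncard)
    (hdegA : ∀ a : VA, (H.neighborSet (.inl a)).ncard ≤ DA)
    (hdegB : ∀ b : VB, (H.neighborSet (.inr b)).ncard ≤ DB)
    (hnoIT : ¬ HasIT H (Sum.map pA pB))
    (Z : Finset (Sym2 (VA ⊕ VB)))
    (hZedges : ∀ e ∈ Z, e ∈ H.edgeSet)
    (hZcard : Z.card ≤ Fintype.card ιA + Fintype.card ιB - 1)
    (hdom : ∀ v : VA ⊕ VB, ∃ e ∈ Z, ∃ u ∈ e, H.Adj v u) :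
    Fintype.card ιA * kA ≤ (Fintype.card ιA + Fintype.card ιB - 1) * DB ∧
    Fintype.card ιB * kB ≤ (Fintype.card ιA + Fintype.card ιB - 1) * DA ∧
    1 < (DA : ℚ) / kB + (DB : ℚ) / kA :=
  stmt14_general H hb1 hb2 kA kB DA DB hkA hkB pA pB hsA hsB hdegA hdegB Z hZedges hZcard hdom
end
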